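/- arXiv:2512.07587 — 2 statements merged into one kernel-verified Lean document; each statement's English description precedes it below -/
import Mathlib

section
/- Let A be a unital C*-algebra, and let p, q' be projections in A such that ‖q' p‖ < 1/10 and q' ~ p. Then there exists a projection q ∈ A with q ⟂ p (i.e., qp = 0) and q Murray–von Neumann equivalent to q'. -/
lemma commute_cfc_of_commute {A : Type*} [CStarAlgebra A] {d x : A}
    (hd : IsSelfAdjoint d) (h : x * d = d * x) (g : ℝ → ℝ) :
    x * cfc g d = cfc g d * x := by
  by_cases hg : ContinuousOn g (spectrum ℝ d)
  · have key : ∀ f : C(spectrum ℝ d, ℝ), x * cfcHom hd f = cfcHom hd f * x := by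
      have hdense : Dense (polynomialFunctions (spectrum ℝ d) : Set C(spectrum ℝ d, ℝ)) := by
        rw [dense_iff_closure_eq, ← Subalgebra.topologicalClosure_coe,
          polynomialFunctions.topologicalClosure]
        rfl
      have hcont : Continuous (cfcHom hd : C(spectrum ℝ d, ℝ) →⋆ₐ[ℝ] A) :=
        (cfcHom_isClosedEmbedding hd).continuous
      have heq : (fun f : C(spectrum ℝ d, ℝ) => x * cfcHom hd f)
          = fun f => cfcHom hd f * x := by
        refine Continuous.ext_on hdense (by fun_prop) (by fun_prop) ?_
        intro f hf
        rw [polynomialFunctions.eq_adjoin_X] at hf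
        induction hf using Algebra.adjoin_induction with
        | mem f hf =>
          simp only [Set.mem_singleton_iff] at hf
          subst hf
          have : (Polynomial.toContinuousMapOnAlgHom (spectrum ℝ d) Polynomial.X)
              = (ContinuousMap.id ℝ).restrict (spectrum ℝ d) := by
            ext t; simp
          show x * cfcHom hd _ = cfcHom hd _ * x
          rw [this, cfcHom_id hd]
          exact h
        | algebraMap r =>
          show x * cfcHom hd _ = cfcHom hd _ * x
          rw [AlgHomClass.commutes]
          exact (Algebra.commute_algebraMap_left r x).symm
        | add f₁ f₂ _ _ h₁ h₂ => simp only [map_add, mul_add, add_mul, h₁, h₂]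
        | mul f₁ f₂ _ _ h₁ h₂ =>
          simp only [map_mul, ← mul_assoc, h₁]
          simp only [mul_assoc, h₂]
      exact fun f => congrFun heq f
    rw [cfc_apply g d hd hg]
    exact key _
  · rw [cfc_apply_of_not_continuousOn d hg]
    simp

lemma norm_le_one_of_proj {A : Type*} [CStarAlgebra A] {e : A}
    (he : IsIdempotentElem e) (he_sa : IsSelfAdjoint e) : ‖e‖ ≤ 1 := by
  by_cases h0 : e = 0
  · simp [h0]
  · have h1 : ‖e‖ * ‖e‖ = ‖e‖ := by
      conv_rhs => rw [← he.eq]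
      rw [← CStarRing.norm_star_mul_self, he_sa.star_eq, he.eq]
    have h2 : ‖e‖ ≠ 0 := norm_ne_zero_iff.mpr h0
    nlinarith [norm_nonneg e]

lemma equiv_of_close {A : Type*} [CStarAlgebra A] {q q' : A}
    (hq : IsIdempotentElem q) (hq_sa : IsSelfAdjoint q)
    (hq' : IsIdempotentElem q') (hq'_sa : IsSelfAdjoint q')
    (hnorm : ‖q - q'‖ < 1) :
    ∃ u : A, star u * u = q ∧ u * star u = q' := by
  rcases subsingleton_or_nontrivial A with hS | hN
  · exact ⟨0, Subsingleton.elim _ _, Subsingleton.elim _ _⟩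
  have hqe : q * q = q := hq.eq
  have hq'e : q' * q' = q' := hq'.eq
  have h1 : ∀ x : A, q * (q * x) = q * x := fun x => by rw [← mul_assoc, hqe]
  have h2 : ∀ x : A, q' * (q' * x) = q' * x := fun x => by rw [← mul_assoc, hq'e]
  set a := q - q' with ha_def
  have ha_sa : IsSelfAdjoint a := hq_sa.sub hq'_sa
  set d := a * a with hd_def
  have hd_sa : IsSelfAdjoint d := by
    rw [hd_def, IsSelfAdjoint, star_mul, ha_sa.star_eq]
  have hd_norm : ‖d‖ < 1 := by
    have : ‖d‖ = ‖a‖ * ‖a‖ := by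
      calc ‖d‖ = ‖star a * a‖ := by rw [ha_sa.star_eq]
      _ = ‖a‖ * ‖a‖ := CStarRing.norm_star_mul_self
    rw [this]
    nlinarith [norm_nonneg a]
  -- spectrum of d is within (-1, 1)
  have hspec : ∀ t ∈ spectrum ℝ d, 1 - t > 0 := by
    intro t ht
    have := spectrum.norm_le_norm_of_mem ht
    have : |t| < 1 := lt_of_le_of_lt this hd_norm
    rw [abs_lt] at this
    linarith [this.2]
  set g : ℝ → ℝ := fun t => (Real.sqrt (1 - t))⁻¹ with hg_def
  have hg_cont : ContinuousOn g (spectrum ℝ d) := by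
    apply ContinuousOn.inv₀
    · exact (Real.continuous_sqrt.comp (continuous_const.sub continuous_id)).continuousOn
    · intro t ht
      exact ne_of_gt (Real.sqrt_pos.mpr (hspec t ht))
  set c := cfc g d with hc_def
  have hc_sa : IsSelfAdjoint c := cfc_predicate g d
  have hc_comm_d : c * d = d * c := (commute_cfc_of_commute hd_sa rfl g).symm
  have hone_sub : cfc (fun t : ℝ => 1 - t) d = 1 - d := by
    rw [cfc_sub (fun _ : ℝ => 1) (fun t : ℝ => t) d, cfc_id' ℝ d]
    congr 1
    exact cfc_one ℝ d
  have hc1 : c * ((1 - d) * c) = 1 := by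
    rw [hc_def, ← hone_sub, ← cfc_mul (fun t : ℝ => 1 - t) g d (by fun_prop) hg_cont,
      ← cfc_mul g (fun t : ℝ => (1 - t) * g t) d hg_cont
        (((continuous_const.sub continuous_id).continuousOn).mul hg_cont)]
    conv_rhs => rw [← cfc_one (R := ℝ) d hd_sa]
    apply cfc_congr
    intro t ht
    have h3 := hspec t ht
    have h4 : Real.sqrt (1 - t) ≠ 0 := ne_of_gt (Real.sqrt_pos.mpr h3)
    simp only [hg_def]
    rw [show (1 : ℝ) - t = Real.sqrt (1 - t) * Real.sqrt (1 - t) from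
      (Real.mul_self_sqrt (le_of_lt h3)).symm]
    rw [Pi.one_apply, Real.sqrt_mul_self (Real.sqrt_nonneg _)]
    field_simp
  have hc1' : c * (1 - d) * c = 1 := by rw [mul_assoc]; exact hc1
  set e := c * c with he_def
  have he1 : e * (1 - d) = 1 := by
    calc e * (1 - d) = c * (c * (1 - d)) := by rw [he_def, mul_assoc]
    _ = c * ((1 - d) * c) := by
        congr 1
        have : c * (1 - d) = (1 - d) * c := by
          simp only [mul_sub, sub_mul, mul_one, one_mul, hc_comm_d]
        rw [this]
    _ = 1 := hc1
  have he2 : (1 - d) * e = 1 := by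
    calc (1 - d) * e = ((1 - d) * c) * c := by rw [he_def, mul_assoc]
    _ = (c * (1 - d)) * c := by
        congr 1
        simp only [mul_sub, sub_mul, mul_one, one_mul, hc_comm_d]
    _ = 1 := hc1'
  set z := q * q' + (1 - q) * (1 - q') with hz_def
  have hz_star : star z = q' * q + (1 - q') * (1 - q) := by
    simp [hz_def, star_mul, star_sub, star_one, hq_sa.star_eq, hq'_sa.star_eq, star_add]
  have hzz1 : star z * z = 1 - d := by
    rw [hz_star, hz_def, hd_def, ha_def]
    simp only [mul_sub, sub_mul, mul_add, add_mul, mul_one, one_mul, mul_assoc, hqe, hq'e, h1, h2]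
    abel
  have hzz2 : z * star z = 1 - d := by
    rw [hz_star, hz_def, hd_def, ha_def]
    simp only [mul_sub, sub_mul, mul_add, add_mul, mul_one, one_mul, mul_assoc, hqe, hq'e, h1, h2]
    abel
  have hzq' : z * q' = q * z := by
    rw [hz_def]
    simp only [mul_sub, sub_mul, mul_add, add_mul, mul_one, one_mul, mul_assoc, hqe, hq'e, h1, h2]
    abel
  have hq'd : q' * d = d * q' := by
    rw [hd_def, ha_def]
    simp only [mul_sub, sub_mul, mul_add, add_mul, mul_one, one_mul, mul_assoc, hqe, hq'e, h1, h2]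
    abel
  have hq'c : q' * c = c * q' := commute_cfc_of_commute hd_sa hq'd g
  have h3 : ∀ x : A, c * (q' * x) = q' * (c * x) := fun x => by
    rw [← mul_assoc, ← hq'c, mul_assoc]
  have hs : z * (c * (c * star z)) = 1 := by
    have hrw : c * (c * star z) = e * star z := by rw [he_def, mul_assoc]
    rw [hrw]
    have step2 : (z * (e * star z)) * (1 - d) = 1 - d := by
      calc (z * (e * star z)) * (1 - d) = z * (e * (star z * (z * star z))) := by
            rw [← hzz2]; simp only [mul_assoc]
      _ = z * ((e * (star z * z)) * star z) := by simp only [mul_assoc]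
      _ = z * ((e * (1 - d)) * star z) := by rw [hzz1]
      _ = z * (1 * star z) := by rw [he1]
      _ = 1 - d := by rw [one_mul, hzz2]
    calc z * (e * star z) = (z * (e * star z)) * ((1 - d) * e) := by rw [he2, mul_one]
    _ = ((z * (e * star z)) * (1 - d)) * e := by simp only [mul_assoc]
    _ = (1 - d) * e := by rw [step2]
    _ = 1 := he2
  -- the partial isometry
  refine ⟨q' * c * star z, ?_, ?_⟩
  · have hstar : star (q' * c * star z) = z * (c * q') := by
      simp [star_mul, hc_sa.star_eq, hq'_sa.star_eq, mul_assoc]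
    rw [hstar]
    calc z * (c * q') * (q' * c * star z)
        = z * (c * (q' * (q' * (c * star z)))) := by simp only [mul_assoc]
      _ = z * (c * (q' * (c * star z))) := by rw [h2]
      _ = z * (q' * (c * (c * star z))) := by rw [h3]
      _ = (z * q') * (c * (c * star z)) := by simp only [mul_assoc]
      _ = (q * z) * (c * (c * star z)) := by rw [hzq']
      _ = q * (z * (c * (c * star z))) := by simp only [mul_assoc]
      _ = q := by rw [hs, mul_one]
  · have hstar : star (q' * c * star z) = z * (c * q') := by
      simp [star_mul, hc_sa.star_eq, hq'_sa.star_eq, mul_assoc]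
    rw [hstar]
    calc q' * c * star z * (z * (c * q')) = q' * (c * ((star z * z) * (c * q'))) := by
          simp only [mul_assoc]
    _ = q' * ((c * ((1 - d) * c)) * q') := by rw [hzz1]; simp only [mul_assoc]
    _ = q' * (1 * q') := by rw [hc1]
    _ = q' := by rw [one_mul, hq'e]


/-- If `p`, `q'` are projections in a unital C*-algebra with `‖q' p‖ < 1/10` and
`q' ∼ p` (Murray–von Neumann), then there is a projection `q` orthogonal to `p`
with `q ∼ q'`. -/
theorem stmt_2 {A : Type*} [CStarAlgebra A]
    (p q' : A) (hp : IsIdempotentElem p) (hp_sa : IsSelfAdjoint p)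
    (hq' : IsIdempotentElem q') (hq'_sa : IsSelfAdjoint q')
    (hequiv_proj : ∃ r : A, IsIdempotentElem r ∧ IsSelfAdjoint r ∧
      ∃ w : A, star w * w = q' ∧ w * star w = r)
    (hnorm : ‖q' * p‖ < 1 / 10)
    (hq'p : ∃ v : A, star v * v = q' ∧ v * star v = p) :
    ∃ q : A, IsIdempotentElem q ∧ IsSelfAdjoint q ∧ q * p = 0 ∧ p * q = 0 ∧
      ∃ u : A, star u * u = q ∧ u * star u = q' := by
  rcases subsingleton_or_nontrivial A with hS | hN
  · exact ⟨0, Subsingleton.elim _ _, Subsingleton.elim _ _, Subsingleton.elim _ _,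
      Subsingleton.elim _ _, 0, Subsingleton.elim _ _, Subsingleton.elim _ _⟩
  clear hequiv_proj hq'p
  have hpe : p * p = p := hp.eq
  have hq'e : q' * q' = q' := hq'.eq
  have h1 : ∀ x : A, p * (p * x) = p * x := fun x => by rw [← mul_assoc, hpe]
  have h2 : ∀ x : A, q' * (q' * x) = q' * x := fun x => by rw [← mul_assoc, hq'e]
  set b := (1 - p) * q' * (1 - p) with hb_def
  have hb_sa : IsSelfAdjoint b := by
    rw [hb_def, IsSelfAdjoint]
    simp only [star_mul, star_sub, star_one, hp_sa.star_eq, hq'_sa.star_eq, mul_assoc]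
  have h1p : (1 - p) * p = 0 := by rw [sub_mul, one_mul, hpe, sub_self]
  have hp1 : p * (1 - p) = 0 := by rw [mul_sub, mul_one, hpe, sub_self]
  have hbp : b * p = 0 := by rw [hb_def, mul_assoc, h1p, mul_zero]
  have hpb : p * b = 0 := by
    rw [hb_def, ← mul_assoc, ← mul_assoc, hp1, zero_mul, zero_mul]
  have hbb : b * b - b = -((1 - p) * ((q' * p) * (p * q')) * (1 - p)) := by
    rw [hb_def]
    simp only [mul_sub, sub_mul, mul_add, add_mul, mul_one, one_mul, mul_assoc, hpe, hq'e, h1, h2]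
    abel
  have h1p_norm : ‖(1 : A) - p‖ ≤ 1 :=
    norm_le_one_of_proj hp.one_sub ((IsSelfAdjoint.one (R := A)).sub hp_sa)
  have hpq'_star : p * q' = star (q' * p) := by
    rw [star_mul, hp_sa.star_eq, hq'_sa.star_eq]
  have hm_norm : ‖(q' * p) * (p * q')‖ = ‖q' * p‖ * ‖q' * p‖ := by
    rw [hpq'_star]
    exact CStarRing.norm_self_mul_star
  have hnorm_bb : ‖b * b - b‖ < 1 / 100 := by
    rw [hbb, norm_neg]
    have hle : ‖(1 - p) * ((q' * p) * (p * q')) * (1 - p)‖ ≤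
        ‖(1 - p) * ((q' * p) * (p * q'))‖ * ‖(1 : A) - p‖ := norm_mul_le _ _
    have hle2 : ‖(1 - p) * ((q' * p) * (p * q'))‖ ≤ ‖(1 : A) - p‖ * ‖(q' * p) * (p * q')‖ :=
      norm_mul_le _ _
    have hqp0 : (0 : ℝ) ≤ ‖q' * p‖ := norm_nonneg _
    nlinarith [norm_nonneg ((1 : A) - p), norm_nonneg ((q' * p) * (p * q')),
      norm_nonneg ((1 - p) * ((q' * p) * (p * q'))), hm_norm]
  have hspec : ∀ t ∈ spectrum ℝ b, |t * t - t| < 1 / 100 := by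
    intro t ht
    have hmem : t * t - t ∈ spectrum ℝ (b * b - b) := by
      have hcfc : b * b - b = cfc (fun s : ℝ => s * s - s) b := by
        rw [cfc_sub (fun s : ℝ => s * s) (fun s : ℝ => s) b,
          cfc_mul (fun s : ℝ => s) (fun s : ℝ => s) b, cfc_id' ℝ b]
      rw [hcfc, cfc_map_spectrum (fun s : ℝ => s * s - s) b]
      exact ⟨t, ht, rfl⟩
    have := spectrum.norm_le_norm_of_mem hmem
    rw [Real.norm_eq_abs] at this
    exact lt_of_le_of_lt this hnorm_bb
  set f : ℝ → ℝ := fun t => min 1 (max 0 (5 * t - 2)) with hf_def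
  have hf_cont : Continuous f := by
    apply Continuous.min continuous_const
    exact Continuous.max continuous_const (by fun_prop)
  set g : ℝ → ℝ := fun t => f t / max t (2 / 5) with hg_def
  have hmaxpos : ∀ t : ℝ, max t (2 / 5 : ℝ) ≠ 0 := fun t =>
    ne_of_gt (lt_of_lt_of_le (by norm_num) (le_max_right t (2 / 5)))
  have hg_cont : Continuous g :=
    hf_cont.div (continuous_id.max continuous_const) hmaxpos
  have hfg : ∀ t : ℝ, t * g t = f t := by
    intro t
    rcases le_or_gt t (2 / 5) with h | h
    · have hf0 : f t = 0 := by
        simp only [hf_def]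
        rw [max_eq_left (by linarith), min_eq_right (by norm_num)]
      have hg0 : g t = 0 := by simp only [hg_def, hf0, zero_div]
      rw [hg0, mul_zero, hf0]
    · have hmax : max t (2 / 5 : ℝ) = t := max_eq_left h.le
      have ht0 : t ≠ 0 := by positivity
      simp only [hg_def, hmax]
      field_simp
  have hdich : ∀ t ∈ spectrum ℝ b, (f t = 0 ∧ |t| < 1 / 50) ∨ (f t = 1 ∧ |1 - t| < 1 / 50) := by
    intro t ht
    have h := hspec t ht
    rw [abs_lt] at h
    obtain ⟨hl, hr⟩ := h
    rcases le_or_gt t (1 / 2) with hle | hgt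
    · left
      have ht1 : t < 1 / 50 := by nlinarith
      have ht2 : -(1 / 50) < t := by nlinarith
      refine ⟨?_, abs_lt.mpr ⟨ht2, ht1⟩⟩
      simp only [hf_def]
      rw [max_eq_left (by linarith), min_eq_right (by norm_num)]
    · right
      have ht1 : (49 : ℝ) / 50 < t := by nlinarith
      have ht2 : t < 51 / 50 := by nlinarith
      refine ⟨?_, abs_lt.mpr ⟨by linarith, by linarith⟩⟩
      simp only [hf_def]
      rw [max_eq_right (by linarith), min_eq_left (by linarith)]
  set Q := cfc f b with hQ_def
  have hQb : Q = b * cfc g b := by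
    rw [hQ_def]
    calc cfc f b = cfc (fun t : ℝ => t * g t) b := by
          apply cfc_congr; intro t _; exact (hfg t).symm
    _ = cfc (fun t : ℝ => t) b * cfc g b :=
        cfc_mul _ _ b (by fun_prop) hg_cont.continuousOn
    _ = b * cfc g b := by rw [cfc_id' ℝ b]
  have hcomm : cfc g b * b = b * cfc g b := by
    have h := cfc_commute_cfc g (fun t : ℝ => t) b
    rw [cfc_id' ℝ b] at h
    exact h
  have hQp : Q * p = 0 := by rw [hQb, ← hcomm, mul_assoc, hbp, mul_zero]
  have hpQ : p * Q = 0 := by rw [hQb, ← mul_assoc, hpb, zero_mul]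
  have hQ_idem : IsIdempotentElem Q := by
    show Q * Q = Q
    rw [hQ_def, ← cfc_mul f f b hf_cont.continuousOn hf_cont.continuousOn]
    apply cfc_congr
    intro t ht
    rcases hdich t ht with ⟨h0, _⟩ | ⟨h1', _⟩
    · simp only [h0, mul_zero]
    · simp only [h1', mul_one]
  have hQ_sa : IsSelfAdjoint Q := cfc_predicate f b
  have hQb_norm : ‖Q - b‖ ≤ 1 / 50 := by
    have hrw : Q - b = cfc (fun t : ℝ => f t - t) b := by
      rw [hQ_def, cfc_sub f (fun t : ℝ => t) b hf_cont.continuousOn (by fun_prop),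
        cfc_id' ℝ b]
    rw [hrw]
    apply norm_cfc_le (by norm_num)
    intro t ht
    rcases hdich t ht with ⟨h0, habs⟩ | ⟨h1', habs⟩
    · rw [h0, Real.norm_eq_abs, zero_sub, abs_neg]
      exact habs.le
    · rw [h1', Real.norm_eq_abs]
      exact habs.le
  have hbq'_id : b - q' = -(q' * p) - (p * q') * (1 - p) := by
    rw [hb_def]
    simp only [mul_sub, sub_mul, mul_add, add_mul, mul_one, one_mul, mul_assoc, hpe, hq'e, h1, h2]
    abel
  have hbq' : ‖b - q'‖ ≤ 2 * ‖q' * p‖ := by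
    rw [hbq'_id]
    have hA : ‖-(q' * p) - (p * q') * (1 - p)‖ ≤ ‖-(q' * p)‖ + ‖(p * q') * (1 - p)‖ :=
      norm_sub_le _ _
    have hB : ‖(p * q') * (1 - p)‖ ≤ ‖p * q'‖ * ‖(1 : A) - p‖ := norm_mul_le _ _
    have hC : ‖p * q'‖ = ‖q' * p‖ := by rw [hpq'_star, norm_star]
    rw [norm_neg] at hA
    nlinarith [norm_nonneg (p * q'), norm_nonneg ((1 : A) - p)]
  have hQq' : ‖Q - q'‖ < 1 := by
    have htri : ‖Q - q'‖ ≤ ‖Q - b‖ + ‖b - q'‖ := by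
      have := norm_add_le (Q - b) (b - q')
      rwa [sub_add_sub_cancel] at this
    linarith
  obtain ⟨u, hu1, hu2⟩ := equiv_of_close hQ_idem hQ_sa hq' hq'_sa hQq'
  exact ⟨Q, hQ_idem, hQ_sa, hQp, hpQ, u, hu1, hu2⟩
end

section
/- Let C be a unital C*-algebra, J a closed two-sided ideal, c ∈ C₊ with the property that there exists X ∈ C with X c X* = 1. Then the hereditary subalgebra closure(c J c) is full in J, i.e., it is not contained in any proper closed two-sided ideal of J: for every b ∈ J₊, b lies in the closed two-sided ideal of J generated by closure(c J c). -/
/-- If `c ∈ C₊` satisfies `X c X* = 1` for some `X`, then the hereditary subalgebra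
`closure (c J c)` is full in the ideal `J`: every positive `b ∈ J` lies in every
closed two-sided ideal of `J` containing `c J c`. -/
theorem stmt_17 {C : Type*} [CStarAlgebra C] [PartialOrder C] [StarOrderedRing C]
    (J : Set C) (hJ_closed : IsClosed J)
    (hideal : ∀ x : C, ∀ b ∈ J, x * b ∈ J ∧ b * x ∈ J)
    (hadd : ∀ b ∈ J, ∀ b' ∈ J, b + b' ∈ J) (hsmul : ∀ (z : ℂ), ∀ b ∈ J, z • b ∈ J)
    (c : C) (hc : 0 ≤ c) (X : C) (hX : X * c * star X = 1) :
    ∀ K : Set C, IsClosed K → K ⊆ J → (0 : C) ∈ K →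
      (∀ x ∈ K, ∀ y ∈ K, x + y ∈ K) → (∀ (z : ℂ), ∀ x ∈ K, z • x ∈ K) →
      (∀ x ∈ K, ∀ r ∈ J, r * x ∈ K ∧ x * r ∈ K) →
      (∀ j ∈ J, c * j * c ∈ K) →
      ∀ b ∈ J, 0 ≤ b → b ∈ K := by
  intro K hKclosed hKsub hK0 hKadd hKsmul hKideal hKcJc b hbJ hb
  have hsa : IsSelfAdjoint b := hb.isSelfAdjoint
  -- Step 1 : b^3 ∈ K
  have hbXJ : b * X ∈ J := (hideal X b hbJ).2
  have hXbJ : star X * b ∈ J := (hideal (star X) b hbJ).1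
  have hjJ : star X * b * X ∈ J := (hideal X (star X * b) hXbJ).2
  have hkK : c * (star X * b * X) * c ∈ K := hKcJc _ hjJ
  have hb3K : b * b * b ∈ K := by
    have h1 := (hKideal _ hkK (b * X) hbXJ).1
    have h2 := (hKideal _ h1 (star X * b) hXbJ).2
    have key : ∀ y : C, X * (c * (star X * y)) = y := by
      intro y
      rw [← mul_assoc, ← mul_assoc, hX, one_mul]
    have : b * X * (c * (star X * b * X) * c) * (star X * b) = b * b * b := by
      simp only [mul_assoc, key]
    rwa [this] at h2
  -- Step 2 : approximate b from b^3
  have hmem : ∀ n : ℕ, ∃ x ∈ K, ‖b - x‖ ≤ 1 / (n + 1) := by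
    intro n
    set m : ℝ := n + 1 with hm
    have hm1 : 1 ≤ m := by rw [hm]; have := Nat.cast_nonneg (α := ℝ) n; linarith
    have hm0 : 0 < m := lt_of_lt_of_le one_pos hm1
    set g : ℝ → ℝ := fun t => m ^ 2 / (1 + m ^ 2 * t ^ 2) with hgdef
    have hg : ContinuousOn g (spectrum ℝ b) := by
      apply ContinuousOn.div continuousOn_const (by fun_prop)
      intro t _; positivity
    set f : ℝ → ℝ := fun t => t * g t with hfdef
    have hf : ContinuousOn f (spectrum ℝ b) := ContinuousOn.mul (by fun_prop) hg
    have hr : cfc f b = b * cfc g b := by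
      rw [hfdef, cfc_mul _ _ b (by fun_prop) hg, cfc_id' ℝ b]
    have hrJ : cfc f b ∈ J := by
      rw [hr]; exact (hideal (cfc g b) b hbJ).2
    refine ⟨cfc f b * (b * b * b) * cfc f b, ?_, ?_⟩
    · exact (hKideal _ ((hKideal _ hb3K (cfc f b) hrJ).1) (cfc f b) hrJ).2
    · have hb3 : b * b * b = cfc (fun t : ℝ => t * t * t) b := by
        rw [cfc_mul _ _ b (by fun_prop) (by fun_prop),
          cfc_mul _ _ b (by fun_prop) (by fun_prop), cfc_id' ℝ b]
      have hcomb : cfc f b * (b * b * b) * cfc f b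
          = cfc (fun t : ℝ => f t * (t * t * t) * f t) b := by
        rw [cfc_mul _ _ b (show ContinuousOn (fun t : ℝ => f t * (t * t * t)) (spectrum ℝ b) from ContinuousOn.mul hf (by fun_prop : ContinuousOn (fun t : ℝ => t * t * t) (spectrum ℝ b))) hf,
          cfc_mul _ _ b hf (by fun_prop), hb3]
      have hdiff : b - cfc f b * (b * b * b) * cfc f b
          = cfc (fun t : ℝ => t - f t * (t * t * t) * f t) b := by
        rw [hcomb, cfc_sub _ _ b (by fun_prop : ContinuousOn (fun t : ℝ => t) (spectrum ℝ b))
          (show ContinuousOn (fun t : ℝ => f t * (t * t * t) * f t) (spectrum ℝ b) from ContinuousOn.mul (show ContinuousOn (fun t : ℝ => f t * (t * t * t)) (spectrum ℝ b) from ContinuousOn.mul hf (by fun_prop : ContinuousOn (fun t : ℝ => t * t * t) (spectrum ℝ b))) hf), cfc_id' ℝ b]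
      rw [hdiff]
      apply norm_cfc_le (by positivity)
      intro t ht
      have ht0 : 0 ≤ t := spectrum_nonneg_of_nonneg hb ht
      have hden : 0 < 1 + m ^ 2 * t ^ 2 := by positivity
      have hval : t - f t * (t * t * t) * f t
          = t * (1 + 2 * (m ^ 2 * t ^ 2)) / (1 + m ^ 2 * t ^ 2) ^ 2 := by
        simp only [hfdef, hgdef]
        field_simp
        ring
      rw [hval, Real.norm_eq_abs, abs_of_nonneg (by positivity),
        div_le_div_iff₀ (by positivity) hm0]
      nlinarith [sq_nonneg (m * t * (m * t) - m * t), sq_nonneg (2 * m * t - 1)]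
  -- Step 3 : pass to the limit
  choose x hxK hxnorm using hmem
  rw [← hKclosed.closure_eq]
  refine mem_closure_of_tendsto (b := (Filter.atTop : Filter ℕ)) ?_ (Filter.Eventually.of_forall hxK)
  rw [tendsto_iff_norm_sub_tendsto_zero]
  refine squeeze_zero (fun n => norm_nonneg _) (fun n => ?_)
    tendsto_one_div_add_atTop_nhds_zero_nat
  rw [norm_sub_rev]
  exact hxnorm n
end
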